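/- arXiv:2308.00452 — 3 statements merged into one kernel-verified Lean document; each statement's English description precedes it below -/
import Mathlib

section
/- Let B be a finite set, S ⊆ B, f : B → C, and let the predicted label of f be g(f) = the label c maximizing |{b ∈ B : f(b) = c}| with ties broken by a fixed linear order on C (smaller label wins). Suppose g(f) = c₁ and a label c₂ ≠ c₁ satisfies the 'safety' condition |{b ∈ S : f(b) = c₁}| ≥ |{b ∈ S : f(b) = c₂}| + |B \ S| + (1 if c₁ > c₂ else 0). Then for every f' : B → C agreeing with f on S, g(f') ≠ c₂. -/
/-- Number of ablations in `B` labeled `c` by `f`. -/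
def voteCount {β C : Type*} [DecidableEq C] (B : Finset β) (f : β → C) (c : C) : ℕ :=
  (B.filter fun b => f b = c).card

/-- `c` is the label returned by the argmax of vote counts over `B` with ties broken
in favor of the smaller label: it beats every other label, counting a one-vote handicap
against every strictly smaller label. -/
def majWins {β C : Type*} [DecidableEq C] [LinearOrder C]
    (B : Finset β) (f : β → C) (c : C) : Prop :=
  ∀ c' ≠ c, voteCount B f c' + (if c' < c then 1 else 0) ≤ voteCount B f c

/-! The patch can add at most `#(B \ S)` votes to `c₂` and remove none of `c₁`'s votes in `S`.
So `c₂` could only win if the safety margin failed to cover both tie-breaking handicaps, the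
`[c₂ < c₁]` in the safety condition and the `[c₁ < c₂]` charged by `majWins`; for distinct
labels exactly one of them is `1`. -/

section VoteCount

variable {β C : Type*} [DecidableEq C]

theorem voteCount_congr {S : Finset β} {f f' : β → C} (h : ∀ b ∈ S, f' b = f b) (c : C) :
    voteCount S f' c = voteCount S f c := by
  unfold voteCount
  rw [Finset.filter_congr fun b hb => by rw [h b hb]]

theorem voteCount_mono {S B : Finset β} (hS : S ⊆ B) (f : β → C) (c : C) :
    voteCount S f c ≤ voteCount B f c :=
  Finset.card_le_card (Finset.filter_subset_filter _ hS)

theorem voteCount_le_voteCount_add_card_sdiff [DecidableEq β] (B S : Finset β) (f : β → C)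
    (c : C) : voteCount B f c ≤ voteCount S f c + (B \ S).card := by
  unfold voteCount
  calc (B.filter fun b => f b = c).card
      ≤ ((S.filter fun b => f b = c) ∪ (B \ S)).card := by
        refine Finset.card_le_card fun b hb => ?_
        by_cases hbS : b ∈ S <;> simp_all
    _ ≤ _ := Finset.card_union_le _ _

end VoteCount

theorem ite_lt_add_ite_gt_eq_one {C : Type*} [LinearOrder C] {a b : C} (h : a ≠ b) :
    (if a < b then 1 else 0) + (if b < a then 1 else 0) = 1 := by
  rcases h.lt_or_gt with h | h <;> simp [h, h.not_gt]

theorem not_local_malicious_never_output_general {β C : Type*} [DecidableEq β] [DecidableEq C]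
    [LinearOrder C] (B S : Finset β) (hS : S ⊆ B) (f : β → C) (c₁ c₂ : C)
    (hne : c₂ ≠ c₁)
    (hsafe : voteCount S f c₂ + (B \ S).card + (if c₂ < c₁ then 1 else 0) ≤
      voteCount S f c₁) :
    ∀ f' : β → C, (∀ b ∈ S, f' b = f b) → ¬ majWins B f' c₂ := by
  intro f' hagree hwins
  have hc₁ : voteCount S f c₁ ≤ voteCount B f' c₁ :=
    voteCount_congr hagree c₁ ▸ voteCount_mono hS f' c₁
  have hc₂ : voteCount B f' c₂ ≤ voteCount S f c₂ + (B \ S).card :=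
    voteCount_congr hagree c₂ ▸ voteCount_le_voteCount_add_card_sdiff B S f' c₂
  have hbeat := hwins c₁ hne.symm
  have hhandicap := ite_lt_add_ite_gt_eq_one hne
  omega

/-- Lemma 1 (one direction): if label `c₂ ≠ c₁ = g(f)` satisfies the safety condition
`|{b∈S : f b = c₁}| ≥ |{b∈S : f b = c₂}| + |B \ S| + [c₁ > c₂]`, then no labeling `f'`
that agrees with `f` on `S` can have `c₂` as its argmax label. -/
theorem not_local_malicious_never_output {β C : Type*} [DecidableEq β] [DecidableEq C]
    [LinearOrder C] (B S : Finset β) (hS : S ⊆ B) (f : β → C) (c₁ c₂ : C)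
    (hg : majWins B f c₁) (hne : c₂ ≠ c₁)
    (hsafe : voteCount S f c₂ + (B \ S).card + (if c₂ < c₁ then 1 else 0) ≤
      voteCount S f c₁) :
    ∀ f' : β → C, (∀ b ∈ S, f' b = f b) → ¬ majWins B f' c₂ :=
  not_local_malicious_never_output_general B S hS f c₁ c₂ hne hsafe
end

section
/- Let B be a finite set, f : B → C, and g(f) = c with the property that |{b : f(b) = c}| ≥ |{b : f(b) = c'}| + 2Δ + (1 if c > c' else 0) for all c' ≠ c, where Δ is a natural number. Then for any f' : B → C differing from f on at most Δ elements, g(f') = c. -/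
/-! Every voter on which two labelings disagree moves at most one vote, so relabeling at most
`Δ` voters costs `c` at most `Δ` votes and gains any `c' ≠ c` at most `Δ` votes; a margin of
`2Δ` plus the tie-breaking indicator absorbs both. -/

section VoteCount

variable {β C : Type*} [DecidableEq C] (B : Finset β) (f g : β → C) (c : C)

theorem voteCount_le_add_card_ne :
    voteCount B f c ≤ voteCount B g c + (B.filter fun b => g b ≠ f b).card := by
  classical
  refine (Finset.card_le_card fun b hb => ?_).trans (Finset.card_union_le _ _)
  simp only [Finset.mem_filter, Finset.mem_union] at hb ⊢
  obtain ⟨hbB, rfl⟩ := hb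
  exact (em (g b = f b)).imp (fun h => ⟨hbB, h⟩) fun h => ⟨hbB, h⟩

theorem voteCount_le_add_card_ne' :
    voteCount B g c ≤ voteCount B f c + (B.filter fun b => g b ≠ f b).card := by
  simpa only [ne_comm] using voteCount_le_add_card_ne B g f c

end VoteCount

theorem drs_certification_general {β C : Type*} [DecidableEq C] [LinearOrder C]
    (B : Finset β) (f : β → C) (c : C) (Δ : ℕ)
    (hmargin : ∀ c' ≠ c,
      voteCount B f c' + 2 * Δ + (if c' < c then 1 else 0) ≤ voteCount B f c) :
    ∀ f' : β → C, (B.filter fun b => f' b ≠ f b).card ≤ Δ → majWins B f' c := by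
  intro f' hΔ c' hc'
  have hc_lost := voteCount_le_add_card_ne B f f' c
  have hc'_gained := voteCount_le_add_card_ne' B f f' c'
  have := hmargin c' hc'
  omega

/-- DRS certification: if `c`'s count beats every other label's count by at least
`2Δ` plus the tie-breaking indicator, then any labeling `f'` differing from `f`
on at most `Δ` elements of `B` still has argmax label `c`. -/
theorem drs_certification {β C : Type*} [DecidableEq β] [DecidableEq C] [LinearOrder C]
    (B : Finset β) (f : β → C) (c : C) (Δ : ℕ)
    (hmargin : ∀ c' ≠ c,
      voteCount B f c' + 2 * Δ + (if c' < c then 1 else 0) ≤ voteCount B f c) :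
    ∀ f' : β → C, (B.filter fun b => f' b ≠ f b).card ≤ Δ → majWins B f' c :=
  drs_certification_general B f c Δ hmargin
end

section
/- In a 2-dimensional cyclic image of size h × w, consider block ablation regions that are s × s squares starting at each position (i, j) with wraparound, and an m × m patch (with m + s - 1 ≤ h and m + s - 1 ≤ w). Then the number of positions (i, j) for which the block ablation intersects the patch is exactly (m + s - 1)². -/
/-!
The condition splits into one condition per axis, so the count is the square of the
one-dimensional count. On one axis, a block `[i, i + s)` meets `[ℓ, ℓ + m)` modulo `n` exactly
when `i + (s - 1) ≡ ℓ + r` for some `r < m + s - 1`, i.e. when `i` is one of the residues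
`ℓ - (s - 1) + r`; as `m + s - 1 ≤ n`, these residues are pairwise distinct.
-/

namespace Nat

theorem injOn_add_mod_range (a n : ℕ) :
    Set.InjOn (fun r => (a + r) % n) (Finset.range n) := by
  intro r₁ h₁ r₂ h₂ h
  simp only [Finset.coe_range, Set.mem_Iio] at h₁ h₂
  have : r₁ ≡ r₂ [MOD n] := ModEq.add_left_cancel' a h
  rwa [Nat.ModEq, Nat.mod_eq_of_lt h₁, Nat.mod_eq_of_lt h₂] at this

theorem add_modEq_iff_eq_add_sub_mod {a b c n : ℕ} (ha : a < n) (hc : c ≤ n) :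
    a + c ≡ b [MOD n] ↔ a = (b + (n - c)) % n := by
  have hn : a + c + (n - c) = a + n := by omega
  constructor
  · intro h
    have := h.add_right (n - c)
    rwa [Nat.ModEq, hn, Nat.add_mod_right, Nat.mod_eq_of_lt ha] at this
  · intro h
    apply ModEq.add_right_cancel' (n - c)
    rw [ModEq, hn, Nat.add_mod_right, Nat.mod_eq_of_lt ha, h]

end Nat

/-- `r = t + (s - 1 - k)` turns a pair of offsets `k < s`, `t < m` into a single `r < m + s - 1`. -/
theorem exists_add_modEq_add_iff {n s m i ℓ : ℕ} (hs : 1 ≤ s) (hm : 1 ≤ m) :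
    (∃ k < s, ∃ t < m, i + k ≡ ℓ + t [MOD n]) ↔
      ∃ r < m + s - 1, i + (s - 1) ≡ ℓ + r [MOD n] := by
  constructor
  · rintro ⟨k, hk, t, ht, h⟩
    refine ⟨t + (s - 1 - k), by omega, ?_⟩
    have := h.add_right (s - 1 - k)
    rwa [show i + k + (s - 1 - k) = i + (s - 1) by omega, add_assoc] at this
  · rintro ⟨r, hr, h⟩
    refine ⟨s - 1 - min r (s - 1), by omega, r - min r (s - 1), by omega, ?_⟩
    apply Nat.ModEq.add_right_cancel' (min r (s - 1))
    rwa [show i + (s - 1 - min r (s - 1)) + min r (s - 1) = i + (s - 1) by omega,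
      show ℓ + (r - min r (s - 1)) + min r (s - 1) = ℓ + r by omega]

theorem card_filter_block_overlap {n s m ℓ : ℕ} (hs : 1 ≤ s) (hm : 1 ≤ m)
    (hn : m + s - 1 ≤ n) :
    ((Finset.range n).filter fun i => ∃ k < s, ∃ t < m, (i + k) % n = (ℓ + t) % n).card
      = m + s - 1 := by
  have hpos : 0 < n := by omega
  have himage : ((Finset.range n).filter fun i => ∃ k < s, ∃ t < m, (i + k) % n = (ℓ + t) % n)
      = (Finset.range (m + s - 1)).image fun r => (ℓ + (n - (s - 1)) + r) % n := by
    ext i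
    simp only [Finset.mem_filter, Finset.mem_range, Finset.mem_image]
    change (i < n ∧ ∃ k < s, ∃ t < m, i + k ≡ ℓ + t [MOD n]) ↔ _
    rw [exists_add_modEq_add_iff hs hm]
    constructor
    · rintro ⟨hi, r, hr, h⟩
      refine ⟨r, hr, ?_⟩
      rw [(Nat.add_modEq_iff_eq_add_sub_mod hi (by omega)).mp h, add_right_comm]
    · rintro ⟨r, hr, rfl⟩
      refine ⟨Nat.mod_lt _ hpos, r, hr, ?_⟩
      rw [Nat.add_modEq_iff_eq_add_sub_mod (Nat.mod_lt _ hpos) (by omega), add_right_comm]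
  rw [himage, Finset.card_image_of_injOn, Finset.card_range]
  exact (Nat.injOn_add_mod_range _ n).mono (by simpa using hn)

/-- In a 2-D cyclic image of size `h × w`, with `s × s` block ablation regions
(starting at each position, wrapping around) and an `m × m` patch starting at
`(ℓ₁, ℓ₂)` (with `m + s - 1 ≤ h` and `m + s - 1 ≤ w`), exactly `(m + s - 1)²`
starting positions yield a block intersecting the patch. -/
theorem block_ablation_overlap_count (h w s m ℓ₁ ℓ₂ : ℕ) (hs : 1 ≤ s) (hm : 1 ≤ m)
    (hbh : m + s - 1 ≤ h) (hbw : m + s - 1 ≤ w) :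
    (((Finset.range h) ×ˢ (Finset.range w)).filter fun ij =>
        ∃ k₁ < s, ∃ k₂ < s, ∃ t₁ < m, ∃ t₂ < m,
          (ij.1 + k₁) % h = (ℓ₁ + t₁) % h ∧ (ij.2 + k₂) % w = (ℓ₂ + t₂) % w).card
      = (m + s - 1) ^ 2 := by
  have hsplit : ∀ ij : ℕ × ℕ,
      (∃ k₁ < s, ∃ k₂ < s, ∃ t₁ < m, ∃ t₂ < m,
        (ij.1 + k₁) % h = (ℓ₁ + t₁) % h ∧ (ij.2 + k₂) % w = (ℓ₂ + t₂) % w) ↔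
      (∃ k < s, ∃ t < m, (ij.1 + k) % h = (ℓ₁ + t) % h) ∧
        (∃ k < s, ∃ t < m, (ij.2 + k) % w = (ℓ₂ + t) % w) := fun _ =>
    ⟨fun ⟨k₁, hk₁, k₂, hk₂, t₁, ht₁, t₂, ht₂, e₁, e₂⟩ => ⟨⟨k₁, hk₁, t₁, ht₁, e₁⟩, k₂, hk₂, t₂, ht₂, e₂⟩,
      fun ⟨⟨k₁, hk₁, t₁, ht₁, e₁⟩, k₂, hk₂, t₂, ht₂, e₂⟩ => ⟨k₁, hk₁, k₂, hk₂, t₁, ht₁, t₂, ht₂, e₁, e₂⟩⟩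
  rw [Finset.filter_congr fun ij _ => hsplit ij,
    Finset.filter_product (fun i => ∃ k < s, ∃ t < m, (i + k) % h = (ℓ₁ + t) % h)
      (fun j => ∃ k < s, ∃ t < m, (j + k) % w = (ℓ₂ + t) % w),
    Finset.card_product, card_filter_block_overlap hs hm hbh, card_filter_block_overlap hs hm hbw,
    sq]
end
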